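/- arXiv:2404.18904 — 6 statements merged into one kernel-verified Lean document; each statement's English description precedes it below -/
import Mathlib

section
/- There is a function h: ℕ × ℕ → ℕ such that for all k, t ∈ ℕ: if G is a graph containing no half-graph of order t as a semi-induced subgraph, and u, v are vertices in the same connected component of the k-near-twin graph of G, then u and v are h(k,t)-near-twins in G. -/
/-- Two vertices `u`, `v` of a graph `G` are `k`-near-twins if the symmetric
difference of their (open) neighborhoods has size at most `k`. -/
def nearTwin {V : Type*} (G : SimpleGraph V) (k : ℕ) (u v : V) : Prop :=
  (symmDiff (G.neighborSet u) (G.neighborSet v)).ncard ≤ k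

/-- The `k`-near-twin graph of `G`: same vertex set, edges between distinct
`k`-near-twins. -/
def ntGraph {V : Type*} (G : SimpleGraph V) (k : ℕ) : SimpleGraph V where
  Adj u v := u ≠ v ∧ nearTwin G k u v
  symm := by
    constructor
    rintro u v ⟨h1, h2⟩
    refine ⟨h1.symm, ?_⟩
    unfold nearTwin at h2 ⊢
    rwa [symmDiff_comm]
  loopless := ⟨fun v h => h.1 rfl⟩

/-- `G` contains a half-graph of order `t` as a semi-induced subgraph: there are
`2t` distinct vertices `u_1,…,u_t, w_1,…,w_t` with `u_i` adjacent to `w_j` iff `i ≤ j`. -/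
def HasSemiInducedHalfGraph {V : Type*} (G : SimpleGraph V) (t : ℕ) : Prop :=
  ∃ u w : Fin t → V, Function.Injective u ∧ Function.Injective w ∧
    (∀ i j, u i ≠ w j) ∧ ∀ i j, (G.Adj (u i) (w j) ↔ i ≤ j)

namespace StairAux

/-- The size threshold: `Mfun k t a` elements suffice to build a staircase of
order `t` while avoiding a forbidden set of size `a` (growing by 1 per level). -/
def Mfun (k : ℕ) : ℕ → ℕ → ℕ
  | 0, _ => 1
  | (t+1), a => (t+1) * (Mfun k t (a+1) + k) + a + t + 2

lemma Mfun_pos (k t a : ℕ) : 1 ≤ Mfun k t a := by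
  cases t with
  | zero => simp [Mfun]
  | succ t => simp only [Mfun]; omega

lemma Mfun_mono (k : ℕ) : ∀ (t : ℕ) {a b : ℕ}, a ≤ b → Mfun k t a ≤ Mfun k t b := by
  intro t
  induction t with
  | zero => intro a b _; simp [Mfun]
  | succ t ih =>
    intro a b hab
    simp only [Mfun]
    have := ih (show a+1 ≤ b+1 by omega)
    have h2 : (t+1) * (Mfun k t (a+1) + k) ≤ (t+1) * (Mfun k t (b+1) + k) :=
      Nat.mul_le_mul_left _ (by omega)
    omega

variable {V : Type} [DecidableEq V]

/-- Card of an intersection changes by at most the symmetric difference. -/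
lemma card_inter_le (Y B B' : Finset V) :
    (Y ∩ B').card ≤ (Y ∩ B).card + (symmDiff B B').card := by
  have hsub : Y ∩ B' ⊆ (Y ∩ B) ∪ (symmDiff B B') := by
    intro x hx
    rw [Finset.mem_inter] at hx
    by_cases hB : x ∈ B
    · exact Finset.mem_union_left _ (Finset.mem_inter.2 ⟨hx.1, hB⟩)
    · refine Finset.mem_union_right _ ?_
      rw [symmDiff_def, Finset.sup_eq_union, Finset.mem_union]
      exact Or.inr (Finset.mem_sdiff.2 ⟨hx.2, hB⟩)
  exact le_trans (Finset.card_le_card hsub) (Finset.card_union_le _ _)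

lemma chain_of_adj (a : ℕ → ℕ) (t : ℕ) (h : ∀ i, i + 1 < t → a i < a (i+1)) :
    ∀ i j, i < j → j < t → a i < a j := by
  intro i j
  induction j with
  | zero => omega
  | succ j ih =>
    intro hij hjt
    rcases Nat.lt_or_ge i j with hlt | hge
    · exact lt_trans (ih hlt (by omega)) (h j hjt)
    · have : i = j := by omega
      subst this
      exact h i hjt

/-- The key staircase extraction lemma. -/
lemma stair (k m : ℕ) (S : ℕ → Finset V) (g : ℕ → V)
    (hstep : ∀ i, i + 1 ≤ m → (symmDiff (S i) (S (i+1))).card ≤ k) :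
    ∀ (t c : ℕ) (A Y : Finset V), c ≤ m → Y ⊆ S c → (∀ y ∈ Y, y ∉ S m) →
      Mfun k t A.card ≤ Y.card →
      ∃ (a : ℕ → ℕ) (w : ℕ → V), a 0 = c ∧ (∀ i, i + 1 < t → a i < a (i+1)) ∧
        (∀ i, i < t → a i ≤ m) ∧ (∀ j, j < t → w j ∈ Y) ∧
        (∀ i, i < t → ∀ j, j < t → (w j ∈ S (a i) ↔ i ≤ j)) ∧
        (∀ j, j < t → w j ∉ A) ∧ (∀ i, i < t → ∀ j, j < t → w j ≠ g (a i)) := by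
  intro t
  induction t with
  | zero =>
    intro c A Y hcm hY0 hYm hbig
    have hY : Y.Nonempty := Finset.card_pos.mp (lt_of_lt_of_le (Mfun_pos k 0 A.card) hbig)
    obtain ⟨y₀, _⟩ := hY
    exact ⟨fun _ => c, fun _ => y₀, rfl, by omega, by omega, by omega, by omega, by omega, by omega⟩
  | succ t ih =>
    intro c A Y hcm hY0 hYm hbig
    have hY : Y.Nonempty := Finset.card_pos.mp (lt_of_lt_of_le (Mfun_pos k (t+1) A.card) hbig)
    obtain ⟨y₀, hy₀⟩ := hY
    have hcm' : c < m := by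
      rcases Nat.lt_or_ge c m with h | h
      · exact h
      · exfalso; have : c = m := by omega
        exact hYm y₀ hy₀ (this ▸ hY0 hy₀)
    set θ := Mfun k t (A.card + 1) with hθ
    have hbig' : (t+1) * (θ + k) + A.card + t + 2 ≤ Y.card := by
      simpa [Mfun, hθ] using hbig
    -- the set of candidate times
    set F := (Finset.range (m+1)).filter (fun c' => θ ≤ (Y ∩ S c').card) with hF
    have hmemF : ∀ c', c' ∈ F ↔ (c' ≤ m ∧ θ ≤ (Y ∩ S c').card) := by
      intro c'; simp [hF, Finset.mem_filter, Finset.mem_range, Nat.lt_succ_iff]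
    have hc1F : c + 1 ∈ F := by
      rw [hmemF]
      constructor
      · omega
      · have h1 : (Y ∩ S c).card ≤ (Y ∩ S (c+1)).card + (symmDiff (S (c+1)) (S c)).card :=
          card_inter_le Y (S (c+1)) (S c)
        have h2 : (symmDiff (S (c+1)) (S c)).card ≤ k := by
          rw [symmDiff_comm]; exact hstep c hcm'
        have h3 : (Y ∩ S c).card = Y.card := by rw [Finset.inter_eq_left.mpr hY0]
        have h4 : θ + k ≤ Y.card := by nlinarith [hbig']
        omega
    have hFne : F.Nonempty := ⟨c+1, hc1F⟩
    set a₂ := F.max' hFne with ha₂def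
    have ha₂F : a₂ ∈ F := F.max'_mem hFne
    have ha₂m : a₂ ≤ m := ((hmemF a₂).mp ha₂F).1
    have ha₂card : θ ≤ (Y ∩ S a₂).card := ((hmemF a₂).mp ha₂F).2
    have hca₂ : c < a₂ := lt_of_lt_of_le (Nat.lt_succ_self c) (F.le_max' _ hc1F)
    have hmax : ∀ c', c' ≤ m → a₂ < c' → (Y ∩ S c').card < θ := by
      intro c' hc'm hc'
      by_contra hcon
      push_neg at hcon
      have : c' ∈ F := (hmemF c').mpr ⟨hc'm, hcon⟩
      exact absurd (F.le_max' c' this) (by omega)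
    have ha₂m' : a₂ < m := by
      rcases Nat.lt_or_ge a₂ m with h | h
      · exact h
      · exfalso
        have he : a₂ = m := by omega
        have : (Y ∩ S m).card = 0 := by
          rw [Finset.card_eq_zero, Finset.eq_empty_iff_forall_notMem]
          intro y hy
          rw [Finset.mem_inter] at hy
          exact hYm y hy.1 hy.2
        rw [he] at ha₂card
        have := Mfun_pos k t (A.card + 1)
        omega
    -- presence count at a₂ itself is < θ + k
    have hba₂ : (Y ∩ S a₂).card < θ + k := by
      have h1 : (Y ∩ S a₂).card ≤ (Y ∩ S (a₂+1)).card + (symmDiff (S (a₂+1)) (S a₂)).card :=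
        card_inter_le Y (S (a₂+1)) (S a₂)
      have h2 : (symmDiff (S (a₂+1)) (S a₂)).card ≤ k := by
        rw [symmDiff_comm]; exact hstep a₂ ha₂m'
      have h3 : (Y ∩ S (a₂+1)).card < θ := hmax (a₂+1) (by omega) (by omega)
      omega
    -- apply IH
    set Y' := Y ∩ S a₂ with hY'
    set A' := insert (g c) A with hA'
    have hIHbig : Mfun k t A'.card ≤ Y'.card := by
      refine le_trans (le_trans (Mfun_mono k t (Finset.card_insert_le _ _)) ?_) ha₂card
      exact le_of_eq rfl
    obtain ⟨a', w', p1, p2, p3, p4, p5, p6, p7⟩ :=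
      ih a₂ A' Y' ha₂m Finset.inter_subset_right
        (fun y hy => hYm y (Finset.mem_of_mem_inter_left hy)) hIHbig
    have hchain : ∀ i j, i < j → j < t → a' i < a' j := chain_of_adj a' t p2
    -- the exclusion set
    set E := ((Finset.range t).biUnion fun i => Y ∩ S (a' i)) ∪
      (A ∪ insert (g c) ((Finset.range t).image fun i => g (a' i))) with hE
    have hEcard : E.card ≤ t * (θ + k) + A.card + 1 + t := by
      have h1 : ((Finset.range t).biUnion fun i => Y ∩ S (a' i)).card ≤ t * (θ + k) := by
        have := Finset.card_biUnion_le_card_mul (Finset.range t)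
          (fun i => Y ∩ S (a' i)) (θ + k) ?_
        · simpa [Finset.card_range] using this
        · intro i hi
          rw [Finset.mem_range] at hi
          show (Y ∩ S (a' i)).card ≤ θ + k
          rcases Nat.eq_zero_or_pos i with h0 | h0
          · subst h0; rw [p1, ← hY']; omega
          · have : a₂ < a' i := by
              have := hchain 0 i h0 hi
              rwa [p1] at this
            exact le_of_lt (lt_of_lt_of_le (hmax (a' i) (p3 i hi) this) (by omega))
      have h2 : (A ∪ insert (g c) ((Finset.range t).image fun i => g (a' i))).card ≤
          A.card + 1 + t := by
        refine le_trans (Finset.card_union_le _ _) ?_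
        have h3 : (insert (g c) ((Finset.range t).image fun i => g (a' i))).card ≤ 1 + t := by
          refine le_trans (Finset.card_insert_le _ _) ?_
          have := Finset.card_image_le (s := Finset.range t) (f := fun i => g (a' i))
          simp only [Finset.card_range] at this
          omega
        omega
      calc E.card ≤ _ := Finset.card_union_le _ _
        _ ≤ t * (θ + k) + (A.card + 1 + t) := by omega
        _ = t * (θ + k) + A.card + 1 + t := by ring
    have hw₁ex : (Y \ E).Nonempty := by
      rw [← Finset.card_pos]
      have hYE : Y.card ≤ (Y \ E).card + E.card := by
        have : Y ⊆ (Y \ E) ∪ E := by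
          intro x hx
          by_cases hxE : x ∈ E
          · exact Finset.mem_union_right _ hxE
          · exact Finset.mem_union_left _ (Finset.mem_sdiff.2 ⟨hx, hxE⟩)
        exact le_trans (Finset.card_le_card this) (Finset.card_union_le _ _)
      have : (t+1) * (θ + k) = t * (θ + k) + (θ + k) := by ring
      omega
    obtain ⟨w₁, hw₁⟩ := hw₁ex
    rw [Finset.mem_sdiff] at hw₁
    obtain ⟨hw₁Y, hw₁E⟩ := hw₁
    simp only [hE, Finset.mem_union, Finset.mem_biUnion, Finset.mem_range, Finset.mem_insert,
      Finset.mem_image, not_or, not_exists, not_and] at hw₁E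
    obtain ⟨hw₁S, hw₁A, hw₁gc, hw₁g⟩ := hw₁E
    -- assemble
    refine ⟨fun i => match i with | 0 => c | (i'+1) => a' i',
            fun j => match j with | 0 => w₁ | (j'+1) => w' j', rfl, ?_, ?_, ?_, ?_, ?_, ?_⟩
    · intro i hi
      match i with
      | 0 => show c < a' 0; rw [p1]; exact hca₂
      | (i'+1) => show a' i' < a' (i'+1); exact p2 i' (by omega)
    · intro i hi
      match i with
      | 0 => show c ≤ m; exact hcm
      | (i'+1) => show a' i' ≤ m; exact p3 i' (by omega)
    · intro j hj
      match j with
      | 0 => show w₁ ∈ Y; exact hw₁Y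
      | (j'+1) => show w' j' ∈ Y; exact Finset.mem_of_mem_inter_left (p4 j' (by omega))
    · intro i hi j hj
      match i, j with
      | 0, 0 =>
        show w₁ ∈ S c ↔ (0:ℕ) ≤ 0
        simpa using hY0 hw₁Y
      | 0, (j'+1) =>
        show w' j' ∈ S c ↔ (0:ℕ) ≤ j'+1
        simp only [Nat.zero_le, iff_true]
        exact hY0 (Finset.mem_of_mem_inter_left (p4 j' (by omega)))
      | (i'+1), 0 =>
        show w₁ ∈ S (a' i') ↔ i'+1 ≤ 0
        have hns : w₁ ∉ S (a' i') := by
          intro hmem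
          exact (hw₁S i' (by omega)) (Finset.mem_inter.2 ⟨hw₁Y, hmem⟩)
        simp only [hns, false_iff]
        omega
      | (i'+1), (j'+1) =>
        show w' j' ∈ S (a' i') ↔ i'+1 ≤ j'+1
        have := p5 i' (by omega) j' (by omega)
        rw [this]
        omega
    · intro j hj
      match j with
      | 0 => show w₁ ∉ A; exact hw₁A
      | (j'+1) =>
        show w' j' ∉ A
        have := p6 j' (by omega)
        rw [hA'] at this
        simp only [Finset.mem_insert, not_or] at this
        exact this.2
    · intro i hi j hj
      match i, j with
      | 0, 0 => show w₁ ≠ g c; exact hw₁gc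
      | 0, (j'+1) =>
        show w' j' ≠ g c
        have := p6 j' (by omega)
        rw [hA'] at this
        simp only [Finset.mem_insert, not_or] at this
        exact this.1
      | (i'+1), 0 =>
        show w₁ ≠ g (a' i')
        exact fun hcon => (hw₁g i' (by omega) hcon.symm).elim
      | (i'+1), (j'+1) =>
        show w' j' ≠ g (a' i')
        exact p7 i' (by omega) j' (by omega)

end StairAux

open StairAux in
/-- In a graph with no semi-induced half-graph of order `t`, if `u, v` are connected
in the `k`-near-twin graph, then `|N(u) \ N(v)| < Mfun k t 0`. -/
lemma diff_bound {V : Type} [Fintype V] [DecidableEq V] (G : SimpleGraph V)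
    [DecidableRel G.Adj] (k t : ℕ) (hno : ¬ HasSemiInducedHalfGraph G t) {u v : V}
    (hr : (ntGraph G k).Reachable u v) :
    (G.neighborFinset u \ G.neighborFinset v).card < Mfun k t 0 := by
  obtain ⟨p⟩ := hr
  set x : ℕ → V := fun i => p.getVert i with hx
  set m := p.length with hm
  set S : ℕ → Finset V := fun i => G.neighborFinset (x i) with hS
  have hstep : ∀ i, i + 1 ≤ m → (symmDiff (S i) (S (i+1))).card ≤ k := by
    intro i hi
    have hadj : (ntGraph G k).Adj (x i) (x (i+1)) := p.adj_getVert_succ (by omega)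
    have hnt : nearTwin G k (x i) (x (i+1)) := hadj.2
    unfold nearTwin at hnt
    have hcoe : symmDiff (G.neighborSet (x i)) (G.neighborSet (x (i+1)))
        = ↑(symmDiff (G.neighborFinset (x i)) (G.neighborFinset (x (i+1)))) := by
      rw [Finset.coe_symmDiff]
      simp [SimpleGraph.neighborFinset_def, Set.coe_toFinset]
    rw [hcoe, Set.ncard_coe_finset] at hnt
    exact hnt
  by_contra hcon
  push_neg at hcon
  set Y := G.neighborFinset u \ G.neighborFinset v with hY
  have hY0 : Y ⊆ S 0 := by
    intro y hy
    show y ∈ G.neighborFinset (x 0)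
    have hx0 : x 0 = u := p.getVert_zero
    rw [hx0]
    exact (Finset.mem_sdiff.mp hy).1
  have hYm : ∀ y ∈ Y, y ∉ S m := by
    intro y hy
    show y ∉ G.neighborFinset (x m)
    have hxm : x m = v := p.getVert_length
    rw [hxm]
    exact (Finset.mem_sdiff.mp hy).2
  obtain ⟨a, w, q1, q2, q3, q4, q5, q6, q7⟩ :=
    stair k m S x hstep t 0 ∅ Y (Nat.zero_le m) hY0 hYm (by simpa using hcon)
  apply hno
  refine ⟨fun i : Fin t => x (a i), fun j : Fin t => w j, ?_, ?_, ?_, ?_⟩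
  · -- injectivity of u-side
    intro i i' heq
    by_contra hne
    have hne' : (i : ℕ) ≠ (i' : ℕ) := fun h => hne (Fin.ext h)
    have heq' : x (a i) = x (a i') := heq
    have hSeq : S (a i) = S (a i') := by show G.neighborFinset (x (a i)) = G.neighborFinset (x (a i')); rw [heq']
    rcases Nat.lt_or_ge (i : ℕ) (i' : ℕ) with hlt | hge
    · have h1 : w (i : ℕ) ∈ S (a i) := (q5 i i.isLt i i.isLt).mpr le_rfl
      have h2 : w (i : ℕ) ∉ S (a i') := by
        rw [q5 i' i'.isLt i i.isLt]; omega
      rw [hSeq] at h1; exact h2 h1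
    · have hlt : (i' : ℕ) < (i : ℕ) := by omega
      have h1 : w (i' : ℕ) ∈ S (a i') := (q5 i' i'.isLt i' i'.isLt).mpr le_rfl
      have h2 : w (i' : ℕ) ∉ S (a i) := by
        rw [q5 i i.isLt i' i'.isLt]; omega
      rw [← hSeq] at h1; exact h2 h1
  · -- injectivity of w-side
    intro j j' heq
    by_contra hne
    have heq' : w (j : ℕ) = w (j' : ℕ) := heq
    have hne' : (j : ℕ) ≠ (j' : ℕ) := fun h => hne (Fin.ext h)
    rcases Nat.lt_or_ge (j : ℕ) (j' : ℕ) with hlt | hge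
    · have h1 : w (j' : ℕ) ∈ S (a j') := (q5 j' j'.isLt j' j'.isLt).mpr le_rfl
      have h2 : w (j : ℕ) ∉ S (a j') := by
        rw [q5 j' j'.isLt j j.isLt]; omega
      rw [heq'] at h2; exact h2 h1
    · have hlt : (j' : ℕ) < (j : ℕ) := by omega
      have h1 : w (j : ℕ) ∈ S (a j) := (q5 j j.isLt j j.isLt).mpr le_rfl
      have h2 : w (j' : ℕ) ∉ S (a j) := by
        rw [q5 j j.isLt j' j'.isLt]; omega
      rw [← heq'] at h2; exact h2 h1
  · intro i j
    exact fun hcon' => (q7 i i.isLt j j.isLt) hcon'.symm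
  · intro i j
    rw [← SimpleGraph.mem_neighborFinset]
    have := q5 i i.isLt j j.isLt
    rw [hS] at this
    rw [this, Fin.le_def]

/-- There is a function `h` such that for all `k`, `t`: in any finite graph with no
semi-induced half-graph of order `t`, vertices in the same connected component of the
`k`-near-twin graph are `h k t`-near-twins. -/
theorem stmt2 :
    ∃ h : ℕ → ℕ → ℕ, ∀ (k t : ℕ) (V : Type) (_ : Fintype V) (G : SimpleGraph V),
      ¬ HasSemiInducedHalfGraph G t →
      ∀ u v : V, (ntGraph G k).Reachable u v → nearTwin G (h k t) u v := by
  classical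
  refine ⟨fun k t => 2 * StairAux.Mfun k t 0, ?_⟩
  intro k t V _ G hno u v hr
  letI : DecidableEq V := Classical.decEq V
  letI : DecidableRel G.Adj := Classical.decRel _
  have h1 : (G.neighborFinset u \ G.neighborFinset v).card < StairAux.Mfun k t 0 :=
    diff_bound G k t hno hr
  have h2 : (G.neighborFinset v \ G.neighborFinset u).card < StairAux.Mfun k t 0 :=
    diff_bound G k t hno hr.symm
  unfold nearTwin
  have hcoe : symmDiff (G.neighborSet u) (G.neighborSet v)
      = ↑(symmDiff (G.neighborFinset u) (G.neighborFinset v)) := by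
    rw [Finset.coe_symmDiff]
    simp [SimpleGraph.neighborFinset_def, Set.coe_toFinset]
  rw [hcoe, Set.ncard_coe_finset]
  have : symmDiff (G.neighborFinset u) (G.neighborFinset v)
      = (G.neighborFinset u \ G.neighborFinset v) ∪ (G.neighborFinset v \ G.neighborFinset u) := by
    rw [symmDiff_def, Finset.sup_eq_union]
  rw [this]
  calc ((G.neighborFinset u \ G.neighborFinset v) ∪
        (G.neighborFinset v \ G.neighborFinset u)).card
      ≤ _ := Finset.card_union_le _ _
    _ ≤ 2 * StairAux.Mfun k t 0 := by omega
end

section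
/- Let G be a graph and let A, B ⊆ V(G) be disjoint or equal sets, each of size at least 5k+1, with all vertices in A pairwise k-near-twins and all vertices in B pairwise k-near-twins. If some vertex v ∈ A has more than 2k neighbors in B, then in the graph G' obtained from G by complementing all edges between A and B, every vertex u ∈ A has at most 2k neighbors from B. -/
/-- The graph obtained from `G` by complementing (flipping) all edges between `A` and `B`. -/
def flipEdges {V : Type*} (G : SimpleGraph V) (A B : Finset V) : SimpleGraph V where
  Adj u v := u ≠ v ∧ (((u ∈ A ∧ v ∈ B) ∨ (u ∈ B ∧ v ∈ A)) ↔ ¬ G.Adj u v)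
  symm := by
    constructor
    rintro u v ⟨h1, h2⟩
    refine ⟨h1.symm, ?_⟩
    rw [G.adj_comm]
    tauto
  loopless := ⟨fun v h => h.1 rfl⟩

lemma symmDiff_nbrF_card_le {V : Type*} [Fintype V] [DecidableEq V]
    (G : SimpleGraph V) [DecidableRel G.Adj] {k : ℕ} {u v : V}
    (h : nearTwin G k u v) :
    (symmDiff (G.neighborFinset u) (G.neighborFinset v)).card ≤ k := by
  have hc : (((symmDiff (G.neighborFinset u) (G.neighborFinset v)) : Finset V) : Set V)
      = symmDiff (G.neighborSet u) (G.neighborSet v) := by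
    ext x
    simp [Finset.mem_symmDiff, Set.mem_symmDiff]
  unfold nearTwin at h
  rwa [← hc, Set.ncard_coe_finset] at h

lemma inter_card_le {V : Type*} [Fintype V] [DecidableEq V]
    (G : SimpleGraph V) [DecidableRel G.Adj] {k : ℕ} {u v : V} (B : Finset V)
    (h : nearTwin G k u v) :
    (G.neighborFinset u ∩ B).card ≤ (G.neighborFinset v ∩ B).card + k := by
  have hsub : G.neighborFinset u ∩ B ⊆
      (G.neighborFinset v ∩ B) ∪ symmDiff (G.neighborFinset u) (G.neighborFinset v) := by
    intro x hx
    simp only [Finset.mem_inter] at hx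
    by_cases hv : x ∈ G.neighborFinset v
    · exact Finset.mem_union_left _ (Finset.mem_inter.mpr ⟨hv, hx.2⟩)
    · exact Finset.mem_union_right _ (Finset.mem_symmDiff.mpr (Or.inl ⟨hx.1, hv⟩))
  have h1 := Finset.card_le_card hsub
  have h2 := Finset.card_union_le (G.neighborFinset v ∩ B)
    (symmDiff (G.neighborFinset u) (G.neighborFinset v))
  have h3 := symmDiff_nbrF_card_le G h
  omega

lemma count_bound {V : Type*} [Fintype V] [DecidableEq V]
    (G : SimpleGraph V) [DecidableRel G.Adj] (k : ℕ) (A B : Finset V)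
    (htA : ∀ u ∈ A, ∀ v ∈ A, nearTwin G k u v)
    (htB : ∀ u ∈ B, ∀ v ∈ B, nearTwin G k u v)
    {u : V} (hu : u ∈ A) (m : ℕ)
    (hm1 : m ≤ (G.neighborFinset u ∩ B).card)
    (hm2 : m ≤ ((B \ G.neighborFinset u).erase u).card) :
    m * A.card ≤ m * k + k * A.card := by
  classical
  obtain ⟨S, hSsub, hScard⟩ := Finset.exists_subset_card_eq hm1
  obtain ⟨T, hTsub, hTcard⟩ := Finset.exists_subset_card_eq hm2
  have hcards : S.card = T.card := by rw [hScard, hTcard]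
  let e : {x // x ∈ S} ≃ {x // x ∈ T} := Finset.equivOfCardEq hcards
  have hSmem : ∀ x ∈ S, G.Adj u x ∧ x ∈ B := by
    intro x hx
    have := hSsub hx
    simp only [Finset.mem_inter, SimpleGraph.mem_neighborFinset] at this
    exact this
  have hTmem : ∀ x ∈ T, x ≠ u ∧ x ∈ B ∧ ¬ G.Adj u x := by
    intro x hx
    have := hTsub hx
    simp only [Finset.mem_erase, Finset.mem_sdiff, SimpleGraph.mem_neighborFinset] at this
    tauto
  -- lower bound on each pair's agreement count
  have hlow : ∀ p ∈ S.attach,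
      A.card ≤ k + (A.filter fun i => (G.Adj i ↑p ↔ G.Adj i ↑(e p))).card := by
    intro p _
    have hsplit := Finset.card_filter_add_card_filter_not
      (s := A) (p := fun i => (G.Adj i ↑p ↔ G.Adj i ↑(e p)))
    have hneg : (A.filter fun i => ¬(G.Adj i ↑p ↔ G.Adj i ↑(e p))).card ≤ k := by
      have hsub : (A.filter fun i => ¬(G.Adj i ↑p ↔ G.Adj i ↑(e p))) ⊆
          symmDiff (G.neighborFinset ↑p) (G.neighborFinset ↑(e p)) := by
        intro i hi
        simp only [Finset.mem_filter] at hi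
        simp only [Finset.mem_symmDiff, SimpleGraph.mem_neighborFinset]
        have h1 := G.adj_comm i ↑p
        have h2 := G.adj_comm i ↑(e p)
        tauto
      exact (Finset.card_le_card hsub).trans
        (symmDiff_nbrF_card_le G (htB _ (hSmem _ p.2).2 _ (hTmem _ (e p).2).2.1))
    omega
  have hlower : m * A.card ≤ m * k +
      ∑ p ∈ S.attach, (A.filter fun i => (G.Adj i ↑p ↔ G.Adj i ↑(e p))).card := by
    calc m * A.card = ∑ _p ∈ S.attach, A.card := by
          rw [Finset.sum_const, Finset.card_attach, hScard, smul_eq_mul]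
      _ ≤ ∑ p ∈ S.attach, (k + (A.filter fun i => (G.Adj i ↑p ↔ G.Adj i ↑(e p))).card) :=
          Finset.sum_le_sum hlow
      _ = m * k + ∑ p ∈ S.attach, (A.filter fun i => (G.Adj i ↑p ↔ G.Adj i ↑(e p))).card := by
          rw [Finset.sum_add_distrib, Finset.sum_const, Finset.card_attach, hScard, smul_eq_mul]
  -- upper bound via rows
  have hupper : ∑ p ∈ S.attach, (A.filter fun i => (G.Adj i ↑p ↔ G.Adj i ↑(e p))).card
      ≤ k * A.card := by
    have hswap : ∑ p ∈ S.attach, (A.filter fun i => (G.Adj i ↑p ↔ G.Adj i ↑(e p))).card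
        = ∑ i ∈ A, (S.attach.filter fun (p : {x // x ∈ S}) =>
            (G.Adj i ↑p ↔ G.Adj i ↑(e p))).card := by
      simp only [Finset.card_filter]
      exact Finset.sum_comm
    rw [hswap]
    have hbound : ∀ i ∈ A,
        (S.attach.filter fun (p : {x // x ∈ S}) => (G.Adj i ↑p ↔ G.Adj i ↑(e p))).card ≤ k := by
      intro i hi
      have hk := symmDiff_nbrF_card_le G (htA u hu i hi)
      refine le_trans (Finset.card_le_card_of_injOn
        (fun (p : {x // x ∈ S}) => if G.Adj i ↑p then (↑(e p) : V) else (↑p : V)) ?_ ?_) hk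
      · intro p hp
        simp only [Finset.mem_coe, Finset.mem_filter] at hp
        obtain ⟨-, hiff⟩ := hp
        dsimp only
        by_cases hadj : G.Adj i ↑p
        · rw [if_pos hadj]
          simp only [Finset.mem_coe, Finset.mem_symmDiff, SimpleGraph.mem_neighborFinset]
          exact Or.inr ⟨hiff.mp hadj, (hTmem _ (e p).2).2.2⟩
        · rw [if_neg hadj]
          simp only [Finset.mem_coe, Finset.mem_symmDiff, SimpleGraph.mem_neighborFinset]
          exact Or.inl ⟨(hSmem _ p.2).1, hadj⟩
      · intro p _ q _ heq
        dsimp only at heq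
        by_cases hp1 : G.Adj i ↑p
        · by_cases hq1 : G.Adj i ↑q
          · rw [if_pos hp1, if_pos hq1] at heq
            exact e.injective (Subtype.coe_injective heq)
          · rw [if_pos hp1, if_neg hq1] at heq
            exfalso
            have h1 := (hTmem _ (e p).2).2.2
            have h2 := (hSmem _ q.2).1
            rw [heq] at h1; exact h1 h2
        · by_cases hq1 : G.Adj i ↑q
          · rw [if_neg hp1, if_pos hq1] at heq
            exfalso
            have h1 := (hTmem _ (e q).2).2.2
            have h2 := (hSmem _ p.2).1
            rw [← heq] at h1; exact h1 h2
          · rw [if_neg hp1, if_neg hq1] at heq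
            exact Subtype.coe_injective heq
    calc ∑ i ∈ A, (S.attach.filter fun (p : {x // x ∈ S}) =>
            (G.Adj i ↑p ↔ G.Adj i ↑(e p))).card
        ≤ ∑ _i ∈ A, k := Finset.sum_le_sum hbound
      _ = k * A.card := by rw [Finset.sum_const, smul_eq_mul, mul_comm]
  omega

lemma flip_adj_iff {V : Type*} (G : SimpleGraph V) (A B : Finset V) (u x : V) :
    (flipEdges G A B).Adj u x ↔
      u ≠ x ∧ (((u ∈ A ∧ x ∈ B) ∨ (u ∈ B ∧ x ∈ A)) ↔ ¬ G.Adj u x) := Iff.rfl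

lemma cover_card {V : Type*} [Fintype V] [DecidableEq V]
    (G : SimpleGraph V) [DecidableRel G.Adj] (B : Finset V) (u : V) :
    B.card ≤ (G.neighborFinset u ∩ B).card + ((B \ G.neighborFinset u).erase u).card + 1 := by
  have hsub : B ⊆ (G.neighborFinset u ∩ B) ∪ insert u ((B \ G.neighborFinset u).erase u) := by
    intro x hx
    by_cases h1 : x ∈ G.neighborFinset u
    · exact Finset.mem_union_left _ (Finset.mem_inter.mpr ⟨h1, hx⟩)
    · by_cases h2 : x = u
      · subst h2; exact Finset.mem_union_right _ (Finset.mem_insert_self _ _)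
      · exact Finset.mem_union_right _ (Finset.mem_insert_of_mem
          (Finset.mem_erase.mpr ⟨h2, Finset.mem_sdiff.mpr ⟨hx, h1⟩⟩))
  have h1 := Finset.card_le_card hsub
  have h2 := Finset.card_union_le (G.neighborFinset u ∩ B)
    (insert u ((B \ G.neighborFinset u).erase u))
  have h3 := Finset.card_insert_le u ((B \ G.neighborFinset u).erase u)
  omega

/-- If `A`, `B` are disjoint or equal, of size `≥ 5k+1`, each consisting of pairwise
`k`-near-twins, and some `v ∈ A` has more than `2k` neighbors in `B`, then after
flipping the edges between `A` and `B`, every `u ∈ A` has at most `2k` neighbors in `B`. -/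
theorem stmt5 {V : Type*} [Fintype V] [DecidableEq V]
    (G : SimpleGraph V) [DecidableRel G.Adj]
    (k : ℕ) (A B : Finset V) (hAB : A = B ∨ Disjoint A B)
    (hA : 5 * k + 1 ≤ A.card) (hB : 5 * k + 1 ≤ B.card)
    (htA : ∀ u ∈ A, ∀ v ∈ A, nearTwin G k u v)
    (htB : ∀ u ∈ B, ∀ v ∈ B, nearTwin G k u v)
    (hv : ∃ v ∈ A, 2 * k < (G.neighborFinset v ∩ B).card) :
    ∀ u ∈ A, ((flipEdges G A B).neighborSet u ∩ ↑B).ncard ≤ 2 * k := by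
  intro u hu
  obtain ⟨v, hvA, hvB⟩ := hv
  have hset : ((flipEdges G A B).neighborSet u ∩ ↑B) = ↑((B \ G.neighborFinset u).erase u) := by
    ext x
    simp only [Set.mem_inter_iff, SimpleGraph.mem_neighborSet, flip_adj_iff, Finset.mem_coe,
      Finset.mem_erase, Finset.mem_sdiff, SimpleGraph.mem_neighborFinset]
    constructor
    · rintro ⟨⟨hne, hiff⟩, hxB⟩
      exact ⟨fun h => hne h.symm, hxB, fun hadj => (hiff.mp (Or.inl ⟨hu, hxB⟩)) hadj⟩
    · rintro ⟨hne, hxB, hnadj⟩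
      exact ⟨⟨fun h => hne h.symm, ⟨fun _ => hnadj, fun _ => Or.inl ⟨hu, hxB⟩⟩⟩, hxB⟩
  rw [hset, Set.ncard_coe_finset]
  by_contra hcon
  push_neg at hcon
  have hsu_sv : (G.neighborFinset v ∩ B).card ≤ (G.neighborFinset u ∩ B).card + k :=
    inter_card_le G B (htA v hvA u hu)
  by_cases hcase : 2 * k + 1 ≤ (G.neighborFinset u ∩ B).card
  · have hc := count_bound G k A B htA htB hu (2 * k + 1) hcase (by omega)
    nlinarith
  · push_neg at hcase
    have hk1 : 1 ≤ k := by omega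
    by_cases hcase2 : 2 * k + 1 ≤ ((B \ G.neighborFinset v).erase v).card
    · have hc := count_bound G k A B htA htB hvA (2 * k + 1) (by omega) hcase2
      nlinarith
    · push_neg at hcase2
      have hBv := cover_card G B v
      have hsu2k : 2 * k ≤ (G.neighborFinset u ∩ B).card := by omega
      have hc := count_bound G k A B htA htB hu (2 * k) hsu2k (by omega)
      nlinarith
end

section
/- Let G be a graph with strong r-coloring number at most m (witnessed by some linear order on V(G)). Then every vertex of G has finite (r, m-1)-rank; equivalently, the (r,m-1)-ranking procedure assigns a finite value in ℕ to every vertex of G. -/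
/-- `u` lies in the closed `r`-neighborhood of `v` in `G − S`: there is a walk
from `v` to `u` of length at most `r` avoiding `S`. -/
def AvoidClose {V : Type*} (G : SimpleGraph V) (r : ℕ) (S : Finset V) (v u : V) : Prop :=
  ∃ p : G.Walk v u, p.length ≤ r ∧ ∀ x ∈ p.support, x ∉ S

/-- `RankLE G r m i v` : the `(r,m)`-rank of `v` in `G` is at most `i`.
Vertices of degree at most `m` have rank `1`; a vertex has rank at most `i+1` if some
set `S` of at most `m` other vertices can be deleted so that every vertex (other than
`v`) in the closed `r`-neighborhood of `v` in `G − S` has rank at most `i`.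
A vertex has finite rank iff `∃ i, RankLE G r m i v`. -/
inductive RankLE {V : Type*} (G : SimpleGraph V) (r m : ℕ) : ℕ → V → Prop
  | base (v : V) (h : (G.neighborSet v).ncard ≤ m) : RankLE G r m 1 v
  | step (i : ℕ) (v : V) (S : Finset V) (hv : v ∉ S) (hS : S.card ≤ m)
      (h : ∀ u, u ≠ v → AvoidClose G r S v u → RankLE G r m i u) : RankLE G r m (i + 1) v

/-- `w` is strongly `r`-reachable from `v` w.r.t. the order `le`: `v ≤ w` and there is
a walk from `v` to `w` of length at most `r` whose internal vertices are strictly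
smaller than `v`. -/
def StronglyReachable {V : Type*} (G : SimpleGraph V) (le : V → V → Prop) (r : ℕ)
    (v w : V) : Prop :=
  le v w ∧ ∃ p : G.Walk v w, p.length ≤ r ∧
    ∀ x ∈ p.support, x ≠ v → x ≠ w → (le x v ∧ x ≠ v)

private theorem rankle_succ {V : Type*} [Fintype V] {G : SimpleGraph V} {r m i : ℕ} {v : V}
    (h : RankLE G r m i v) : RankLE G r m (i + 1) v := by
  induction h with
  | base v h =>
    refine RankLE.step 1 v (Set.toFinite (G.neighborSet v)).toFinset ?_ ?_ ?_
    · simp [SimpleGraph.irrefl]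
    · rwa [← Set.ncard_eq_toFinset_card]
    · rintro u hu ⟨p, _, havoid⟩
      cases p with
      | nil => exact (hu rfl).elim
      | @cons _ w _ hadj q =>
        exact absurd (by simp [hadj] : w ∈ (Set.toFinite (G.neighborSet v)).toFinset)
          (havoid w (by simp [SimpleGraph.Walk.support_cons, q.start_mem_support]))
  | step i v S hv hS h ih =>
    exact RankLE.step (i + 1) v S hv hS fun u hu ha => ih u hu ha

private theorem rankle_mono {V : Type*} [Fintype V] {G : SimpleGraph V} {r m i j : ℕ} {v : V}
    (hij : i ≤ j) (h : RankLE G r m i v) : RankLE G r m j v := by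
  induction hij with
  | refl => exact h
  | step _ ih => exact rankle_succ ih

private theorem key_aux {V : Type*} (G : SimpleGraph V) (L : LinearOrder V) (r : ℕ)
    (S : Finset V) :
    ∀ (u v : V) (q : G.Walk u v),
      (∀ x, StronglyReachable G L.le r v x → x ≠ v → x ∈ S) →
      q.length ≤ r → (∀ x ∈ q.support, x ∉ S) →
      ∀ x ∈ q.support, x = v ∨ L.lt x v := by
  letI := L
  intro u v q
  induction q with
  | nil =>
    intro _ _ _ x hx
    simp only [SimpleGraph.Walk.support_nil, List.mem_singleton] at hx
    exact Or.inl hx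
  | @cons u w v hadj q' ihq =>
    intro hSin hlen havoid x hx
    rw [SimpleGraph.Walk.support_cons, List.mem_cons] at hx
    have hlen' : q'.length ≤ r := by
      rw [SimpleGraph.Walk.length_cons] at hlen; omega
    have havoid' : ∀ y ∈ q'.support, y ∉ S := fun y hy =>
      havoid y (by rw [SimpleGraph.Walk.support_cons, List.mem_cons]; exact Or.inr hy)
    rcases hx with rfl | hx
    · -- x = u, the far end of the walk
      by_contra hcon
      push_neg at hcon
      obtain ⟨hxv, hxnlt⟩ := hcon
      have hle : v ≤ x := hxnlt
      have hSR : StronglyReachable G L.le r v x := by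
        refine ⟨hle, (SimpleGraph.Walk.cons hadj q').reverse, by simpa using hlen, ?_⟩
        intro y hy hyv hyx
        rw [SimpleGraph.Walk.support_reverse, List.mem_reverse,
          SimpleGraph.Walk.support_cons, List.mem_cons] at hy
        rcases hy with rfl | hy
        · exact (hyx rfl).elim
        · rcases ihq hSin hlen' havoid' y hy with h | h
          · exact (hyv h).elim
          · exact ⟨le_of_lt h, hyv⟩
      exact havoid x (SimpleGraph.Walk.cons hadj q').start_mem_support (hSin x hSR hxv)
    · exact ihq hSin hlen' havoid' x hx

/-- If a linear order on `V(G)` witnesses strong `r`-coloring number at most `m`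
(every vertex has at most `m` strongly `r`-reachable vertices), then every vertex of
`G` has finite `(r, m-1)`-rank. -/
theorem stmt7 {V : Type*} [Fintype V] (G : SimpleGraph V) (r m : ℕ)
    (L : LinearOrder V)
    (hscol : ∀ v : V, {w | StronglyReachable G L.le r v w}.ncard ≤ m) :
    ∀ v : V, ∃ i : ℕ, RankLE G r (m - 1) i v := by
  letI := L
  classical
  intro v
  induction v using WellFounded.induction (r := (· < · : V → V → Prop))
    (hwf := Finite.wellFounded_of_trans_of_irrefl _) with
  | _ v ih =>
  have hvR : StronglyReachable G L.le r v v := by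
    refine ⟨le_refl v, SimpleGraph.Walk.nil, by simp, ?_⟩
    intro x hx hxv _
    simp only [SimpleGraph.Walk.support_nil, List.mem_singleton] at hx
    exact (hxv hx).elim
  let S : Finset V :=
    (Set.toFinite ({w | StronglyReachable G L.le r v w} \ {v})).toFinset
  have hvS : v ∉ S := by
    rw [Set.Finite.mem_toFinset]
    exact fun h => h.2 rfl
  have hSin : ∀ x, StronglyReachable G L.le r v x → x ≠ v → x ∈ S := by
    intro x h1 h2
    rw [Set.Finite.mem_toFinset]
    exact ⟨h1, h2⟩
  have hScard : S.card ≤ m - 1 := by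
    have h1 : ({w | StronglyReachable G L.le r v w} \ {v}).ncard + 1 =
        ({w | StronglyReachable G L.le r v w} : Set V).ncard := by
      rw [← Set.ncard_insert_of_notMem (fun h => h.2 rfl) (Set.toFinite _)]
      congr 1
      rw [Set.insert_diff_singleton]
      exact Set.insert_eq_self.2 hvR
    have h2 := hscol v
    have h3 : S.card = ({w | StronglyReachable G L.le r v w} \ {v}).ncard :=
      (Set.ncard_eq_toFinset_card _ _).symm
    omega
  let N : ℕ := Finset.univ.sup (fun u : V => if h : u < v then (ih u h).choose else 0)
  refine ⟨N + 1, RankLE.step N v S hvS hScard ?_⟩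
  rintro u hu ⟨p, hlen, havoid⟩
  have havoid' : ∀ x ∈ p.reverse.support, x ∉ S := by
    intro x hx
    rw [SimpleGraph.Walk.support_reverse, List.mem_reverse] at hx
    exact havoid x hx
  have hulv : u < v := by
    rcases key_aux G L r S u v p.reverse hSin (by simpa using hlen) havoid'
        u p.reverse.start_mem_support with h | h
    · exact (hu h).elim
    · exact h
  have hrank := (ih u hulv).choose_spec
  refine rankle_mono ?_ hrank
  calc (ih u hulv).choose = if h : u < v then (ih u h).choose else 0 := by
        rw [dif_pos hulv]
    _ ≤ N := Finset.le_sup (f := fun u : V => if h : u < v then (ih u h).choose else 0)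
          (Finset.mem_univ u)
end

section
/- There exist functions R, D: ℕ³ → ℕ such that for all k, m, s ∈ ℕ the following holds: if G is a graph with no subgraph isomorphic to the complete bipartite graph K_{s,s}, and X ⊆ V(G) satisfies |X| ≥ R(k,m,s) and every vertex in X has degree at least D(k,m,s), then there exists Y ⊆ X with |Y| ≥ m such that every vertex y ∈ Y has at least k neighbors in V(G)\Y that are adjacent to no other vertex of Y. -/
/-- `G` contains a complete bipartite subgraph `K_{s,s}`: two disjoint vertex sets of
size `s` with all cross edges present. -/
def HasKss {V : Type*} (G : SimpleGraph V) (s : ℕ) : Prop :=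
  ∃ X Y : Finset V, Disjoint X Y ∧ X.card = s ∧ Y.card = s ∧
    ∀ x ∈ X, ∀ y ∈ Y, G.Adj x y

open Finset in
private lemma kss_of_common {V : Type} [Fintype V] [DecidableEq V] (G : SimpleGraph V)
    (s : ℕ) (S : Finset V) (hS : S.card = s) (T : Finset V) (hT : s ≤ T.card)
    (hadj : ∀ z ∈ T, ∀ y ∈ S, G.Adj z y) : HasKss G s := by
  obtain ⟨T', hT'sub, hT'card⟩ := Finset.exists_subset_card_eq hT
  refine ⟨S, T', ?_, hS, hT'card, fun x hx y hy => (hadj y (hT'sub hy) x hx).symm⟩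
  rw [Finset.disjoint_left]
  intro a haS haT'
  exact G.irrefl (hadj a (hT'sub haT') a haS)

open Finset in
private lemma pop_bound {V : Type} [Fintype V] [DecidableEq V] (G : SimpleGraph V)
    [DecidableRel G.Adj] (s : ℕ) (hs : 1 ≤ s) (hG : ¬ HasKss G s) (Y₀ : Finset V) :
    (Finset.univ.filter (fun z => s ≤ ((G.neighborFinset z) ∩ Y₀).card)).card
      ≤ s * (Y₀.card.choose s) := by
  by_contra hcon
  push_neg at hcon
  set Pop := Finset.univ.filter (fun z => s ≤ ((G.neighborFinset z) ∩ Y₀).card) with hPop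
  set f : V → Finset V := fun z =>
    if h : s ≤ ((G.neighborFinset z) ∩ Y₀).card then (Finset.exists_subset_card_eq h).choose
    else ∅ with hf
  have hfs : ∀ z, (h : s ≤ ((G.neighborFinset z) ∩ Y₀).card) →
      f z ⊆ (G.neighborFinset z) ∩ Y₀ ∧ (f z).card = s := by
    intro z h
    have := (Finset.exists_subset_card_eq h).choose_spec
    rw [hf]; simp only [dif_pos h]; exact this
  have hmaps : ∀ z ∈ Pop, f z ∈ Y₀.powersetCard s := by
    intro z hz
    rw [hPop, Finset.mem_filter] at hz
    obtain ⟨hsub, hcard⟩ := hfs z hz.2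
    exact Finset.mem_powersetCard.mpr ⟨hsub.trans Finset.inter_subset_right, hcard⟩
  have hn : (Y₀.powersetCard s).card * (s - 1) < Pop.card := by
    rw [Finset.card_powersetCard]
    calc Y₀.card.choose s * (s-1) ≤ s * Y₀.card.choose s := by
          rw [mul_comm]; exact Nat.mul_le_mul_right _ (by omega)
      _ < Pop.card := hcon
  obtain ⟨S, hSmem, hSfib⟩ := Finset.exists_lt_card_fiber_of_mul_lt_card_of_maps_to hmaps hn
  apply hG
  refine kss_of_common G s S (Finset.mem_powersetCard.mp hSmem).2
    (Pop.filter (fun z => f z = S)) (by omega) ?_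
  intro z hz y hy
  rw [Finset.mem_filter] at hz
  obtain ⟨hzPop, hzf⟩ := hz
  rw [hPop, Finset.mem_filter] at hzPop
  have hsub := (hfs z hzPop.2).1
  rw [hzf] at hsub
  have := hsub hy
  rw [Finset.mem_inter, SimpleGraph.mem_neighborFinset] at this
  exact this.1

open Finset in
private lemma pair_bound {V : Type} [DecidableEq V] (Y₀ : Finset V) (m : ℕ)
    (y y' : V) (hyY₀ : y ∈ Y₀) (hy'Y₀ : y' ∈ Y₀) (hne : y' ≠ y) :
    ((Y₀.powersetCard m).filter (fun Y => y ∈ Y ∧ y' ∈ Y)).card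
      ≤ (Y₀.card - 2).choose (m - 2) := by
  have key := Finset.card_le_card_of_injOn (f := fun Y => (Y.erase y).erase y')
    (s := (Y₀.powersetCard m).filter (fun Y => y ∈ Y ∧ y' ∈ Y))
    (t := ((Y₀.erase y).erase y').powersetCard (m-2)) ?_ ?_
  · rw [Finset.card_powersetCard, Finset.card_erase_of_mem, Finset.card_erase_of_mem hyY₀] at key
    · have h2 : #Y₀ - 1 - 1 = #Y₀ - 2 := by omega
      rwa [h2] at key
    · exact Finset.mem_erase.mpr ⟨hne, hy'Y₀⟩
  · intro Y hY
    rw [Finset.mem_coe, Finset.mem_filter, Finset.mem_powersetCard] at hY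
    obtain ⟨⟨hYsub, hYcard⟩, hyY, hy'Y⟩ := hY
    refine Finset.mem_powersetCard.mpr ⟨?_, ?_⟩
    · exact Finset.erase_subset_erase _ (Finset.erase_subset_erase _ hYsub)
    · rw [Finset.card_erase_of_mem, Finset.card_erase_of_mem hyY, hYcard]
      · omega
      · exact Finset.mem_erase.mpr ⟨hne, hy'Y⟩
  · intro Y₁ h₁ Y₂ h₂ heq
    simp only [Finset.coe_filter, Set.mem_setOf_eq, Finset.mem_powersetCard] at h₁ h₂
    obtain ⟨_, hy1, hy'1⟩ := h₁
    obtain ⟨_, hy2, hy'2⟩ := h₂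
    ext a
    by_cases hay : a = y
    · subst hay; simp [hy1, hy2]
    · by_cases hay' : a = y'
      · subst hay'; simp [hy'1, hy'2]
      · have : ∀ Z : Finset V, a ∈ (Z.erase y).erase y' ↔ a ∈ Z := by
          intro Z; simp [Finset.mem_erase, hay, hay']
        rw [← this Y₁, ← this Y₂]
        exact iff_of_eq (congrArg (a ∈ ·) heq)

open Finset in
private lemma main_aux (k m s : ℕ) (hs : 2 ≤ s) (hm : 2 ≤ m)
    (V : Type) [Fintype V] [DecidableEq V] (G : SimpleGraph V) [DecidableRel G.Adj]
    (hG : ¬ HasKss G s)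
    (Y₀ : Finset V) (hY₀ : Y₀.card = 2*s*m*m + m + 2)
    (hdeg : ∀ y ∈ Y₀, 2*k + s * ((2*s*m*m + m + 2).choose s) + (2*s*m*m + m + 2)
      ≤ (G.neighborFinset y).card) :
    ∃ Y ⊆ Y₀, Y.card = m ∧ ∀ y ∈ Y,
      k ≤ ((G.neighborFinset y).filter
        (fun z => z ∉ Y₀ ∧ ∀ y' ∈ Y, y' ≠ y → ¬ G.Adj y' z)).card := by
  classical
  set M := 2*s*m*m + m + 2 with hM
  set Pop := Finset.univ.filter (fun z => s ≤ ((G.neighborFinset z) ∩ Y₀).card) with hPopdef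
  have hPopCard : Pop.card ≤ s * (M.choose s) := by
    have := pop_bound G s (by omega) hG Y₀
    rwa [hY₀] at this
  set W := Y₀ ∪ Pop with hW
  have hWcard : W.card ≤ M + s * M.choose s := by
    calc W.card ≤ Y₀.card + Pop.card := Finset.card_union_le _ _
      _ ≤ M + s * M.choose s := by rw [hY₀]; omega
  set Nf : V → Finset V := fun y => (G.neighborFinset y) \ W with hNf
  have hNcard : ∀ y ∈ Y₀, 2*k ≤ (Nf y).card := by
    intro y hy
    have h1 := hdeg y hy
    have h2 : (G.neighborFinset y).card ≤ (Nf y).card + W.card :=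
      Finset.card_le_card_sdiff_add_card
    omega
  have hunpop : ∀ y z, z ∈ Nf y → ((G.neighborFinset z) ∩ Y₀).card ≤ s := by
    intro y z hz
    rw [hNf, Finset.mem_sdiff, hW, Finset.mem_union] at hz
    have : z ∉ Pop := fun h => hz.2 (Or.inr h)
    rw [hPopdef, Finset.mem_filter] at this
    push_neg at this
    exact le_of_lt (this (Finset.mem_univ z))
  have hznotY₀ : ∀ y z, z ∈ Nf y → z ∉ Y₀ := by
    intro y z hz
    rw [hNf, Finset.mem_sdiff, hW, Finset.mem_union] at hz
    exact fun h => hz.2 (Or.inl h)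
  set PP : Finset (Finset V) := Y₀.powersetCard m with hPP
  set C := (M-2).choose (m-2) with hC
  by_contra hcon
  push_neg at hcon
  -- every m-subset has a failing vertex
  have hfail : ∀ Y ∈ PP, ∃ y ∈ Y,
      ((Nf y).filter (fun z => ∀ y' ∈ Y, y' ≠ y → ¬ G.Adj y' z)).card < k := by
    intro Y hY
    rw [hPP, Finset.mem_powersetCard] at hY
    obtain ⟨y, hyY, hlt⟩ := hcon Y hY.1 hY.2
    refine ⟨y, hyY, lt_of_le_of_lt ?_ hlt⟩
    apply Finset.card_le_card
    intro z hz
    rw [Finset.mem_filter] at hz ⊢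
    have hzN : z ∈ G.neighborFinset y := (Finset.mem_sdiff.mp hz.1).1
    exact ⟨hzN, hznotY₀ y z hz.1, hz.2⟩
  -- per-vertex failure count bound
  have key : ∀ y ∈ Y₀, (PP.filter (fun Y => y ∈ Y ∧
      ((Nf y).filter (fun z => ∀ y' ∈ Y, y' ≠ y → ¬ G.Adj y' z)).card < k)).card
      ≤ 2*(s*C) := by
    intro y hy
    set t := (Nf y).card + 1 - k with ht
    have hNy := hNcard y hy
    have htpos : 0 < t := by omega
    have h2t : (Nf y).card ≤ 2*t := by omega
    set F := PP.filter (fun Y => y ∈ Y ∧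
      ((Nf y).filter (fun z => ∀ y' ∈ Y, y' ≠ y → ¬ G.Adj y' z)).card < k) with hF
    have step1 : F.card * t ≤
        ∑ Y ∈ F, ((Nf y).filter (fun z => ¬ ∀ y' ∈ Y, y' ≠ y → ¬ G.Adj y' z)).card := by
      rw [← smul_eq_mul]
      apply Finset.card_nsmul_le_sum
      intro Y hY
      rw [hF, Finset.mem_filter] at hY
      have hsum := Finset.card_filter_add_card_filter_not (s := Nf y)
        (p := fun z => ∀ y' ∈ Y, y' ≠ y → ¬ G.Adj y' z)
      have hlt := hY.2.2
      omega
    have step2 : ∀ Y ∈ F, ((Nf y).filter (fun z => ¬ ∀ y' ∈ Y, y' ≠ y → ¬ G.Adj y' z)).card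
        ≤ ∑ z ∈ Nf y, (((G.neighborFinset z ∩ Y₀).erase y) ∩ Y).card := by
      intro Y hY
      have hYsub : Y ⊆ Y₀ := by
        rw [hF, Finset.mem_filter, hPP, Finset.mem_powersetCard] at hY
        exact hY.1.1
      rw [Finset.card_filter]
      apply Finset.sum_le_sum
      intro z hz
      split_ifs with h
      · exact Nat.zero_le _
      · push_neg at h
        obtain ⟨y', hy'Y, hy'ne, hadj⟩ := h
        refine Finset.card_pos.mpr ⟨y', ?_⟩
        rw [Finset.mem_inter, Finset.mem_erase, Finset.mem_inter,
          SimpleGraph.mem_neighborFinset]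
        exact ⟨⟨hy'ne, hadj.symm, hYsub hy'Y⟩, hy'Y⟩
    have step4 : ∀ z ∈ Nf y, ∑ Y ∈ F, (((G.neighborFinset z ∩ Y₀).erase y) ∩ Y).card
        ≤ s * C := by
      intro z hz
      set Az := (G.neighborFinset z ∩ Y₀).erase y with hAz
      have hAzcard : Az.card ≤ s :=
        le_trans (Finset.card_erase_le) (hunpop y z hz)
      have pb : ∀ y' ∈ Az, (F.filter (fun Y => y' ∈ Y)).card ≤ C := by
        intro y' hy'
        rw [hAz, Finset.mem_erase, Finset.mem_inter] at hy'
        have hsub2 : F.filter (fun Y => y' ∈ Y) ⊆ PP.filter (fun Y => y ∈ Y ∧ y' ∈ Y) := by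
          intro Y hY
          rw [Finset.mem_filter] at hY
          rw [Finset.mem_filter]
          have h1 := hY.1
          rw [hF, Finset.mem_filter] at h1
          exact ⟨h1.1, h1.2.1, hY.2⟩
        refine le_trans (Finset.card_le_card hsub2) ?_
        have hpb := pair_bound Y₀ m y y' hy hy'.2.2 hy'.1
        rw [hY₀] at hpb
        exact hpb
      have inner : ∀ Y ∈ F, (Az ∩ Y).card = ∑ y' ∈ Az, if y' ∈ Y then 1 else 0 := by
        intro Y _
        rw [← Finset.card_filter, Finset.filter_mem_eq_inter]
      calc ∑ Y ∈ F, (Az ∩ Y).card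
          = ∑ Y ∈ F, ∑ y' ∈ Az, (if y' ∈ Y then 1 else 0) := Finset.sum_congr rfl inner
        _ = ∑ y' ∈ Az, ∑ Y ∈ F, (if y' ∈ Y then 1 else 0) := Finset.sum_comm
        _ = ∑ y' ∈ Az, (F.filter (fun Y => y' ∈ Y)).card := by
            refine Finset.sum_congr rfl (fun y' _ => ?_)
            rw [Finset.card_filter]
        _ ≤ ∑ _y' ∈ Az, C := Finset.sum_le_sum pb
        _ = Az.card * C := by rw [Finset.sum_const, smul_eq_mul]
        _ ≤ s * C := Nat.mul_le_mul_right _ hAzcard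
    have chain : F.card * t ≤ (Nf y).card * (s*C) := by
      calc F.card * t
          ≤ ∑ Y ∈ F, ((Nf y).filter (fun z => ¬ ∀ y' ∈ Y, y' ≠ y → ¬ G.Adj y' z)).card :=
            step1
        _ ≤ ∑ Y ∈ F, ∑ z ∈ Nf y, (((G.neighborFinset z ∩ Y₀).erase y) ∩ Y).card :=
            Finset.sum_le_sum step2
        _ = ∑ z ∈ Nf y, ∑ Y ∈ F, (((G.neighborFinset z ∩ Y₀).erase y) ∩ Y).card :=
            Finset.sum_comm
        _ ≤ ∑ _z ∈ Nf y, s * C := Finset.sum_le_sum step4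
        _ = (Nf y).card * (s*C) := by rw [Finset.sum_const, smul_eq_mul]
    have hfin : F.card * t ≤ (2*(s*C)) * t := by
      refine le_trans chain ?_
      calc (Nf y).card * (s*C) ≤ (2*t)*(s*C) := Nat.mul_le_mul_right _ h2t
        _ = (2*(s*C))*t := by ring
    exact Nat.le_of_mul_le_mul_right hfin htpos
  -- total count
  have total : PP.card ≤ ∑ y ∈ Y₀, (PP.filter (fun Y => y ∈ Y ∧
      ((Nf y).filter (fun z => ∀ y' ∈ Y, y' ≠ y → ¬ G.Adj y' z)).card < k)).card := by
    calc PP.card = ∑ _Y ∈ PP, 1 := by rw [Finset.sum_const, smul_eq_mul, mul_one]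
      _ ≤ ∑ Y ∈ PP, (Y₀.filter (fun y => y ∈ Y ∧
          ((Nf y).filter (fun z => ∀ y' ∈ Y, y' ≠ y → ¬ G.Adj y' z)).card < k)).card := by
          refine Finset.sum_le_sum (fun Y hY => ?_)
          obtain ⟨y, hyY, hlt⟩ := hfail Y hY
          have hYsub : Y ⊆ Y₀ := (Finset.mem_powersetCard.mp (by rwa [hPP] at hY)).1
          exact Finset.card_pos.mpr ⟨y, Finset.mem_filter.mpr ⟨hYsub hyY, hyY, hlt⟩⟩
      _ = ∑ Y ∈ PP, ∑ y ∈ Y₀, (if y ∈ Y ∧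
          ((Nf y).filter (fun z => ∀ y' ∈ Y, y' ≠ y → ¬ G.Adj y' z)).card < k
          then 1 else 0) := by
          refine Finset.sum_congr rfl (fun Y _ => ?_)
          rw [Finset.card_filter]
      _ = ∑ y ∈ Y₀, ∑ Y ∈ PP, (if y ∈ Y ∧
          ((Nf y).filter (fun z => ∀ y' ∈ Y, y' ≠ y → ¬ G.Adj y' z)).card < k
          then 1 else 0) := Finset.sum_comm
      _ = ∑ y ∈ Y₀, (PP.filter (fun Y => y ∈ Y ∧
          ((Nf y).filter (fun z => ∀ y' ∈ Y, y' ≠ y → ¬ G.Adj y' z)).card < k)).card := by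
          refine Finset.sum_congr rfl (fun y _ => ?_)
          rw [Finset.card_filter]
  have hPcard : PP.card = M.choose m := by
    rw [hPP, Finset.card_powersetCard, hY₀]
  have hfinal : M.choose m ≤ M * (2*(s*C)) := by
    rw [← hPcard]
    refine le_trans total ?_
    calc ∑ y ∈ Y₀, (PP.filter (fun Y => y ∈ Y ∧
        ((Nf y).filter (fun z => ∀ y' ∈ Y, y' ≠ y → ¬ G.Adj y' z)).card < k)).card
        ≤ ∑ _y ∈ Y₀, 2*(s*C) := Finset.sum_le_sum key
      _ = M * (2*(s*C)) := by rw [Finset.sum_const, smul_eq_mul, hY₀]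
  -- arithmetic contradiction
  obtain ⟨m', rfl⟩ : ∃ m', m = m' + 2 := ⟨m - 2, by omega⟩
  obtain ⟨M'', hM''⟩ : ∃ M'', M = M'' + 2 := ⟨M - 2, by omega⟩
  have hCeq : C = M''.choose m' := by rw [hC, hM'']; congr 1
  have hle : m' ≤ M'' := by
    have h1 : m' + 2 ≤ M := by rw [hM]; omega
    omega
  have hCpos : 0 < C := by rw [hCeq]; exact Nat.choose_pos hle
  have h1 := Nat.add_one_mul_choose_eq M'' m'
  have h2 := Nat.add_one_mul_choose_eq (M''+1) (m'+1)
  have hid : (M''+2)*(M''+1)*C = (M''+2).choose (m'+2) * ((m'+2)*(m'+1)) := by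
    calc (M''+2)*(M''+1)*C = (M''+2) * ((M''+1) * M''.choose m') := by
          rw [hCeq]; ring
      _ = (M''+2) * ((M''+1).choose (m'+1) * (m'+1)) := by rw [h1]
      _ = ((M''+1+1) * (M''+1).choose (m'+1)) * (m'+1) := by ring
      _ = ((M''+1+1).choose (m'+1+1) * (m'+1+1)) * (m'+1) := by rw [h2]
      _ = (M''+2).choose (m'+2) * ((m'+2)*(m'+1)) := by ring_nf
  have hlt : 2*s*((m'+2)*(m'+1)) < M'' + 1 := by
    have e1 : 2*s*(m'+2)*(m'+2) + (m'+2) + 2 = M'' + 2 := by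
      rw [← hM'']
    have e2 : 2*s*((m'+2)*(m'+1)) ≤ 2*s*(m'+2)*(m'+2) := by
      calc 2*s*((m'+2)*(m'+1)) = 2*s*(m'+2)*(m'+1) := by ring
        _ ≤ 2*s*(m'+2)*(m'+2) := Nat.mul_le_mul_left _ (by omega)
    omega
  have hmul : M * (2*(s*C)) * ((m'+2)*(m'+1)) < (M''+2).choose (m'+2) * ((m'+2)*(m'+1)) := by
    rw [← hid, hM'']
    calc (M''+2) * (2*(s*C)) * ((m'+2)*(m'+1))
        = ((M''+2)*C) * (2*s*((m'+2)*(m'+1))) := by ring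
      _ < ((M''+2)*C) * (M''+1) := by
          exact mul_lt_mul_of_pos_left hlt (by positivity)
      _ = (M''+2)*(M''+1)*C := by ring
  have hBM : (M''+2).choose (m'+2) = M.choose (m'+2) := by rw [hM'']
  rw [hBM] at hmul
  have := Nat.mul_le_mul_right ((m'+2)*(m'+1)) hfinal
  omega


/-- Ramsey-type lemma: there are functions `R`, `D` so that in any `K_{s,s}`-subgraph-free
graph, any set `X` of at least `R k m s` vertices, each of degree at least `D k m s`,
contains a subset `Y` of size at least `m` in which every vertex has at least `k`
private neighbors outside `Y` (adjacent to no other vertex of `Y`). -/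
theorem stmt12 :
    ∃ R D : ℕ → ℕ → ℕ → ℕ, ∀ (k m s : ℕ) (V : Type) (_ : Fintype V)
      (G : SimpleGraph V), ¬ HasKss G s →
      ∀ X : Finset V, R k m s ≤ X.card →
        (∀ x ∈ X, D k m s ≤ (G.neighborSet x).ncard) →
        ∃ Y ⊆ X, m ≤ Y.card ∧
          ∀ y ∈ Y, k ≤ {z : V | G.Adj y z ∧ z ∉ Y ∧
            ∀ y' ∈ Y, y' ≠ y → ¬ G.Adj y' z}.ncard := by
  classical
  refine ⟨fun k m s => 2*s*m*m + m + 2,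
    fun k m s => 2*k + s * ((2*s*m*m + m + 2).choose s) + (2*s*m*m + m + 2), ?_⟩
  intro k m s V hV G hG X hX hD
  haveI := hV
  haveI : DecidableEq V := Classical.decEq V
  haveI : DecidableRel G.Adj := Classical.decRel _
  have hncard : ∀ x : V, (G.neighborSet x).ncard = (G.neighborFinset x).card := by
    intro x
    rw [SimpleGraph.neighborFinset_def, Set.ncard_eq_toFinset_card']
  -- s = 0 : contradiction
  rcases Nat.eq_zero_or_pos s with hs0 | hspos
  · subst hs0
    exact absurd ⟨∅, ∅, by simp, by simp, by simp, by simp⟩ hG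
  rcases Nat.lt_or_ge s 2 with hs1 | hs2
  · -- s = 1 : contradiction from any edge
    have hs : s = 1 := by omega
    subst hs
    have hXpos : 0 < X.card := by
      have hX' : 2*1*m*m + m + 2 ≤ X.card := hX
      omega
    obtain ⟨x, hx⟩ := Finset.card_pos.mp hXpos
    have hdx := hD x hx
    rw [hncard] at hdx
    have : 0 < (G.neighborFinset x).card := by
      have hdx' : 2*k + 1 * ((2*1*m*m + m + 2).choose 1) + (2*1*m*m + m + 2)
          ≤ (G.neighborFinset x).card := hdx
      omega
    obtain ⟨z, hz⟩ := Finset.card_pos.mp this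
    rw [SimpleGraph.mem_neighborFinset] at hz
    refine absurd ⟨{x}, {z}, ?_, by simp, by simp, ?_⟩ hG
    · simp [Finset.disjoint_left, G.ne_of_adj hz]
    · intro a ha b hb
      rw [Finset.mem_singleton] at ha hb
      subst ha; subst hb; exact hz
  -- now s ≥ 2
  rcases Nat.eq_zero_or_pos m with hm0 | hmpos
  · subst hm0
    exact ⟨∅, Finset.empty_subset _, by simp, by simp⟩
  rcases Nat.lt_or_ge m 2 with hm1 | hm2
  · -- m = 1
    have hm : m = 1 := by omega
    subst hm
    have hXpos : 0 < X.card := by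
      have hX' : 2*s*1*1 + 1 + 2 ≤ X.card := hX
      omega
    obtain ⟨x, hx⟩ := Finset.card_pos.mp hXpos
    refine ⟨{x}, by simpa using hx, by simp, ?_⟩
    intro y hy
    rw [Finset.mem_singleton] at hy
    subst hy
    have hset : {z : V | G.Adj y z ∧ z ∉ ({y} : Finset V) ∧
        ∀ y' ∈ ({y} : Finset V), y' ≠ y → ¬ G.Adj y' z} = G.neighborSet y := by
      ext z
      simp only [Set.mem_setOf_eq, Finset.mem_singleton, SimpleGraph.mem_neighborSet]
      constructor
      · exact fun h => h.1
      · intro h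
        exact ⟨h, fun he => G.ne_of_adj h (by rw [he]), fun y' hy' hne => absurd hy' hne⟩
    rw [hset]
    have h2 : 2*k + s * ((2*s*1*1 + 1 + 2).choose s) + (2*s*1*1 + 1 + 2)
        ≤ (G.neighborSet y).ncard := hD y hx
    omega
  -- main case
  obtain ⟨Y₀, hY₀sub, hY₀card⟩ := Finset.exists_subset_card_eq hX
  have hdeg' : ∀ y ∈ Y₀, 2*k + s * ((2*s*m*m + m + 2).choose s) + (2*s*m*m + m + 2)
      ≤ (G.neighborFinset y).card := by
    intro y hyY₀
    have h2 := hD y (hY₀sub hyY₀)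
    rw [hncard] at h2
    exact h2
  obtain ⟨Y, hYsub, hYcard, hYgood⟩ := main_aux k m s hs2 hm2 V G hG Y₀ hY₀card hdeg'
  · refine ⟨Y, hYsub.trans hY₀sub, le_of_eq hYcard.symm, ?_⟩
    intro y hy
    have hk := hYgood y hy
    set Fz := (G.neighborFinset y).filter
      (fun z => z ∉ Y₀ ∧ ∀ y' ∈ Y, y' ≠ y → ¬ G.Adj y' z) with hFz
    have hsub : (Fz : Set V) ⊆ {z : V | G.Adj y z ∧ z ∉ Y ∧
        ∀ y' ∈ Y, y' ≠ y → ¬ G.Adj y' z} := by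
      intro z hz
      rw [Finset.mem_coe, hFz, Finset.mem_filter, SimpleGraph.mem_neighborFinset] at hz
      exact ⟨hz.1, fun hzY => hz.2.1 (hYsub hzY), hz.2.2⟩
    calc k ≤ Fz.card := hk
      _ = (Fz : Set V).ncard := (Set.ncard_coe_finset _).symm
      _ ≤ _ := Set.ncard_le_ncard hsub (Set.toFinite _)
end

section
/- Suppose G contains a half-graph of order t = m·k + m + 1 as a semi-induced subgraph, witnessed by vertices u_1,...,u_t, w_1,...,w_t. Then there is a vertex x of G and a set of m+1 vertices in the closed 2-neighborhood of x that are pairwise not k-near-twins in G. (Consequently, any graph class that is 'locally (k,m)-near-covered at radius 2' contains no semi-induced half-graph of order m·k+m+1.) -/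
/-- Far-apart `u`-vertices of a semi-induced half-graph are not near-twins. -/
lemma notNearTwin_of_far {V : Type*} [Fintype V] (G : SimpleGraph V) (k t : ℕ)
    (u w : Fin t → V) (hiw : Function.Injective w)
    (hadj : ∀ i j, G.Adj (u i) (w j) ↔ i ≤ j)
    (a b : Fin t) (hab : a.val + k < b.val) : ¬ nearTwin G k (u a) (u b) := by
  classical
  unfold nearTwin
  push_neg
  have hsub : ↑(Finset.image w (Finset.Ico a b)) ⊆
      symmDiff (G.neighborSet (u a)) (G.neighborSet (u b)) := by
    intro x hx
    simp only [Finset.coe_image, Set.mem_image, Finset.mem_coe, Finset.mem_Ico] at hx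
    obtain ⟨c, ⟨hac, hcb⟩, rfl⟩ := hx
    rw [Set.mem_symmDiff]
    left
    constructor
    · rw [SimpleGraph.mem_neighborSet, hadj]; exact hac
    · rw [SimpleGraph.mem_neighborSet, hadj]; exact fun h => absurd hcb (not_lt.mpr h)
  have hcard : (Finset.image w (Finset.Ico a b)).card = b.val - a.val := by
    rw [Finset.card_image_of_injective _ hiw, Fin.card_Ico]
  calc k < b.val - a.val := by omega
    _ = (Finset.image w (Finset.Ico a b)).card := hcard.symm
    _ = (↑(Finset.image w (Finset.Ico a b)) : Set V).ncard := (Set.ncard_coe_finset _).symm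
    _ ≤ _ := Set.ncard_le_ncard hsub (Set.toFinite _)

/-- If `G` contains a semi-induced half-graph of order `t = m·k + m + 1`, then there is
a vertex `x` and a set of `m+1` vertices within distance `2` of `x` that are pairwise
not `k`-near-twins in `G`. -/
theorem stmt17 {V : Type*} [Fintype V] (G : SimpleGraph V) (k m t : ℕ)
    (ht : t = m * k + m + 1)
    (u w : Fin t → V) (hiu : Function.Injective u) (hiw : Function.Injective w)
    (hdistinct : ∀ i j, u i ≠ w j)
    (hadj : ∀ i j, G.Adj (u i) (w j) ↔ i ≤ j) :
    ∃ (x : V) (T : Finset V), T.card = m + 1 ∧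
      (∀ y ∈ T, ∃ p : G.Walk x y, p.length ≤ 2) ∧
      (∀ y ∈ T, ∀ z ∈ T, y ≠ z → ¬ nearTwin G k y z) := by
  classical
  have htpos : 0 < t := by omega
  have hg : ∀ i : Fin (m + 1), i.val * (k + 1) < t := by
    intro i
    have hi : i.val ≤ m := Nat.lt_succ_iff.mp i.isLt
    have : i.val * (k + 1) ≤ m * (k + 1) := Nat.mul_le_mul_right _ hi
    nlinarith
  set g : Fin (m + 1) → Fin t := fun i => ⟨i.val * (k + 1), hg i⟩ with hgdef
  have hginj : Function.Injective g := by
    intro i j hij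
    have : i.val * (k + 1) = j.val * (k + 1) := congrArg Fin.val hij
    have : i.val = j.val := Nat.eq_of_mul_eq_mul_right (Nat.succ_pos k) this
    exact Fin.ext this
  refine ⟨w ⟨t - 1, by omega⟩, Finset.image (u ∘ g) Finset.univ, ?_, ?_, ?_⟩
  · rw [Finset.card_image_of_injective _ (hiu.comp hginj), Finset.card_univ,
      Fintype.card_fin]
  · intro y hy
    simp only [Finset.mem_image, Finset.mem_univ, true_and, Function.comp] at hy
    obtain ⟨i, rfl⟩ := hy
    have hadj' : G.Adj (w ⟨t - 1, by omega⟩) (u (g i)) := by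
      refine ((hadj _ _).mpr ?_).symm
      have hi : i.val ≤ m := Nat.lt_succ_iff.mp i.isLt
      have h1 : i.val * (k + 1) ≤ m * (k + 1) := Nat.mul_le_mul_right _ hi
      have h2 : m * (k + 1) = m * k + m := by ring
      exact Fin.le_def.mpr (by simp only [hgdef]; omega)
    exact ⟨(hadj'.toWalk), by simp⟩
  · intro y hy z hz hne
    simp only [Finset.mem_image, Finset.mem_univ, true_and, Function.comp] at hy hz
    obtain ⟨i, rfl⟩ := hy
    obtain ⟨j, rfl⟩ := hz
    have hij : i ≠ j := fun h => hne (by rw [h])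
    rcases lt_or_gt_of_ne hij with h | h
    · exact notNearTwin_of_far G k t u w hiw hadj (g i) (g j)
        (by simp only [hgdef]; have : i.val < j.val := h; nlinarith)
    · intro hn
      have hn' : nearTwin G k (u (g j)) (u (g i)) := by
        unfold nearTwin at hn ⊢; rwa [symmDiff_comm]
      exact notNearTwin_of_far G k t u w hiw hadj (g j) (g i)
        (by simp only [hgdef]; have : j.val < i.val := h; nlinarith) hn'
end

section
/- Let G be a graph and d, f ∈ ℕ, and suppose that for some vertex v, the set of vertices in the closed r-neighborhood of v with degree greater than d has size greater than (d+1)^r. Then there exists a vertex u in the closed r-neighborhood of v and d+1 vertices of degree greater than d, all distinct from u and within distance r of u in the subgraph induced on N_r(v), reachable from u by pairwise internally vertex-disjoint paths of length at most r each. -/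
open SimpleGraph


private lemma treeLemma {V : Type*} [Fintype V] (G : SimpleGraph V) (t : ℕ) :
    ∀ (r : ℕ) (c : V) (S : Set V),
      (∀ x ∈ S, ∃ w : G.Walk c x, w.length ≤ r) → t ^ r < S.ncard →
      ∃ u : V, (∃ w : G.Walk c u, w.length ≤ r) ∧
        ∃ (f : Fin t → V) (q : ∀ i, G.Walk u (f i)),
          Function.Injective f ∧
          (∀ i, f i ∈ S ∧ f i ≠ u) ∧
          (∀ i, (q i).IsPath ∧ (q i).length ≤ r ∧
            ∀ x ∈ (q i).support, ∃ p : G.Walk c x, p.length ≤ r) ∧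
          (∀ i j, i ≠ j → ∀ x, x ∈ (q i).support → x ∈ (q j).support → x = u) := by
  classical
  rcases Nat.eq_zero_or_pos t with ht | ht
  · subst ht
    intro r c S _ _
    exact ⟨c, ⟨Walk.nil, by simp⟩, Fin.elim0, fun i => i.elim0,
      fun i => i.elim0, fun i => i.elim0, fun i => i.elim0, fun i j _ => i.elim0⟩
  intro r
  induction r with
  | zero =>
    intro c S hS hcard
    exfalso
    have hsub : S ⊆ {c} := by
      intro x hx
      obtain ⟨w, hw⟩ := hS x hx
      have := Walk.eq_of_length_eq_zero (Nat.le_zero.mp hw)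
      simp [← this]
    have h1 := Set.ncard_le_ncard hsub (Set.finite_singleton c)
    rw [Set.ncard_singleton] at h1
    simp at hcard
    omega
  | succ r ih =>
    intro c S hS hcard
    have hreach : ∀ x ∈ S, G.Reachable c x := fun x hx => ⟨(hS x hx).choose⟩
    have hdist : ∀ x ∈ S, G.dist c x ≤ r + 1 :=
      fun x hx => le_trans (SimpleGraph.dist_le _) (hS x hx).choose_spec
    -- predecessor function
    have hpredex : ∀ x : V, ∃ y : V,
        x ≠ c → G.Reachable c x → G.Adj y x ∧ G.dist c y + 1 = G.dist c x := by
      intro x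
      by_cases hx : x ≠ c ∧ G.Reachable c x
      · obtain ⟨hxc, hr⟩ := hx
        obtain ⟨p, hp⟩ := hr.exists_walk_length_eq_dist
        have hdpos : 0 < G.dist c x := hr.pos_dist_of_ne (Ne.symm hxc)
        cases hq : p.reverse with
        | nil =>
          exfalso
          have : p.length = 0 := by
            have := congrArg Walk.length hq
            simpa using this
          omega
        | cons h q =>
          rename_i y
          refine ⟨y, fun _ _ => ⟨h.symm, ?_⟩⟩
          have hqlen : q.length + 1 = G.dist c x := by
            have := congrArg Walk.length hq
            simp at this
            omega
          have h1 : G.dist c y ≤ q.length := by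
            have := SimpleGraph.dist_le q.reverse
            simpa using this
          have hry : G.Reachable c y := hr.trans h.reachable
          have h2 : G.dist c x ≤ G.dist c y + 1 := by
            obtain ⟨p', hp'⟩ := hry.exists_walk_length_eq_dist
            have := SimpleGraph.dist_le (p'.concat h.symm)
            rwa [Walk.length_concat, hp'] at this
          omega
      · exact ⟨c, fun h1 h2 => absurd ⟨h1, h2⟩ hx⟩
    choose pred hpr using hpredex
    set s : V → V := fun x => pred^[G.dist c x - 1] x with hs_def
    -- the tree walk
    have key : ∀ n (x : V), G.Reachable c x → G.dist c x = n →
        ∃ w : G.Walk c x, w.length = n ∧ (∀ y ∈ w.support, y ≠ c → s y = s x) ∧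
          (x ≠ c → G.dist c (s x) = 1 ∧ ∃ w' : G.Walk (s x) x, w'.length = n - 1) := by
      intro n
      induction n with
      | zero =>
        intro x hr hd
        have hx : c = x := hr.dist_eq_zero_iff.mp hd
        subst hx
        refine ⟨Walk.nil, rfl, ?_, fun h => absurd rfl h⟩
        intro y hy hyc
        simp [Walk.support_nil] at hy
        exact absurd hy hyc
      | succ n ihn =>
        intro x hr hd
        have hxc : x ≠ c := by
          rintro rfl
          rw [SimpleGraph.dist_self] at hd
          omega
        obtain ⟨hadj, hdp⟩ := hpr x hxc hr
        have hdpred : G.dist c (pred x) = n := by omega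
        have hrpred : G.Reachable c (pred x) := hr.trans hadj.symm.reachable
        obtain ⟨w, hwlen, hwsupp, hwrest⟩ := ihn (pred x) hrpred hdpred
        rcases Nat.eq_zero_or_pos n with hn | hn
        · -- pred x = c, x adjacent to c
          have hsxx : s x = x := by simp [hs_def, hd, hn]
          refine ⟨w.concat hadj, by rw [Walk.length_concat, hwlen], ?_, fun _ => ?_⟩
          · intro y hy hyc
            rw [Walk.support_concat, List.mem_append, List.mem_singleton] at hy
            rcases hy with hy | rfl
            · exfalso
              have hle := Walk.length_takeUntil_le w hy
              rw [hwlen, hn] at hle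
              exact hyc (Walk.eq_of_length_eq_zero (Nat.le_zero.mp hle)).symm
            · rfl
          · constructor
            · rw [hsxx]
              omega
            · rw [hsxx]
              exact ⟨Walk.nil, by simp [hn]⟩
        · -- pred x ≠ c
          have hpc : pred x ≠ c := by
            intro h
            rw [h, SimpleGraph.dist_self] at hdpred
            omega
          have hsp : s x = s (pred x) := by
            simp only [hs_def, hd, hdpred]
            obtain ⟨m, rfl⟩ : ∃ m, n = m + 1 := ⟨n - 1, by omega⟩
            simp [Function.iterate_succ_apply]
          obtain ⟨hd1, w', hw'len⟩ := hwrest hpc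
          refine ⟨w.concat hadj, by rw [Walk.length_concat, hwlen], ?_, fun _ => ⟨?_, ?_⟩⟩
          · intro y hy hyc
            rw [Walk.support_concat, List.mem_append, List.mem_singleton] at hy
            rcases hy with hy | rfl
            · rw [hsp]; exact hwsupp y hy hyc
            · rfl
          · rw [hsp]; exact hd1
          · rw [hsp]
            exact ⟨w'.concat hadj, by rw [Walk.length_concat, hw'len]; omega⟩
    -- case split
    have hfin : (S \ {c}).Finite := Set.toFinite _
    set Sf : Finset V := hfin.toFinset with hSf_def
    have hSfmem : ∀ x, x ∈ Sf ↔ x ∈ S ∧ x ≠ c := by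
      intro x
      rw [hSf_def, Set.Finite.mem_toFinset, Set.mem_diff, Set.mem_singleton_iff]
    by_cases hA : ∃ c₀, t ^ r < (Sf.filter (fun x => s x = c₀)).card
    · -- CASE A: big fiber, recurse
      obtain ⟨c₀, hc₀⟩ := hA
      set F : Set V := ↑(Sf.filter fun x => s x = c₀) with hF_def
      have hFmem : ∀ x ∈ F, x ∈ S ∧ x ≠ c ∧ s x = c₀ := by
        intro x hx
        rw [hF_def, Finset.coe_filter, Set.mem_setOf_eq] at hx
        obtain ⟨h1, h2⟩ := hx
        obtain ⟨h3, h4⟩ := (hSfmem x).mp h1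
        exact ⟨h3, h4, h2⟩
      have hFcard : t ^ r < F.ncard := by rw [hF_def, Set.ncard_coe_finset]; exact hc₀
      have hFwalk : ∀ x ∈ F, ∃ w : G.Walk c₀ x, w.length ≤ r := by
        intro x hx
        obtain ⟨hxS, hxc, hsx⟩ := hFmem x hx
        obtain ⟨w, hwlen, _, hrest⟩ := key (G.dist c x) x (hreach x hxS) rfl
        obtain ⟨_, w', hw'⟩ := hrest hxc
        rw [← hsx]
        refine ⟨w', ?_⟩
        rw [hw']
        have := hdist x hxS
        omega
      obtain ⟨u, ⟨wu, hwu⟩, f, q, hinj, hfS, hq, hdisj⟩ := ih c₀ F hFwalk hFcard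
      -- a walk from c to c₀ of length 1
      have hFne : F.Nonempty := by
        rcases Set.eq_empty_or_nonempty F with h | h
        · rw [h, Set.ncard_empty] at hFcard; omega
        · exact h
      obtain ⟨x₀, hx₀⟩ := hFne
      obtain ⟨hx₀S, hx₀c, hsx₀⟩ := hFmem x₀ hx₀
      obtain ⟨_, _, _, hrest₀⟩ := key (G.dist c x₀) x₀ (hreach x₀ hx₀S) rfl
      obtain ⟨hd1, _⟩ := hrest₀ hx₀c
      rw [hsx₀] at hd1
      obtain ⟨p1, hp1⟩ := exists_walk_of_dist_ne_zero (by omega : G.dist c c₀ ≠ 0)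
      rw [hd1] at hp1
      refine ⟨u, ⟨p1.append wu, by rw [Walk.length_append]; omega⟩, f, q, hinj,
        fun i => ⟨(hFmem _ (hfS i).1).1, (hfS i).2⟩, fun i => ?_, hdisj⟩
      obtain ⟨hp, hlen, hsup⟩ := hq i
      refine ⟨hp, by omega, fun x hx => ?_⟩
      obtain ⟨p, hplen⟩ := hsup x hx
      exact ⟨p1.append p, by rw [Walk.length_append]; omega⟩
    · -- CASE B: all fibers small, c is the hub
      push_neg at hA
      have hSfcard : t ^ (r + 1) ≤ Sf.card := by
        have h1 : Sf.card = (S \ {c}).ncard := by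
          rw [hSf_def]; exact (Set.ncard_eq_toFinset_card _ hfin).symm
        have h2 : S.ncard ≤ (S \ {c}).ncard + 1 := by
          have hsub : S ⊆ (S \ {c}) ∪ {c} := by
            intro x hx
            by_cases h : x = c
            · exact Or.inr (by simp [h])
            · exact Or.inl ⟨hx, h⟩
          calc S.ncard ≤ ((S \ {c}) ∪ {c}).ncard :=
                Set.ncard_le_ncard hsub (Set.toFinite _)
            _ ≤ (S \ {c}).ncard + ({c} : Set V).ncard := Set.ncard_union_le _ _
            _ = (S \ {c}).ncard + 1 := by rw [Set.ncard_singleton]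
        omega
      have himg : t ≤ (Sf.image s).card := by
        have h1 : Sf.card ≤ t ^ r * (Sf.image s).card :=
          Finset.card_le_mul_card_image Sf _ (fun b _ => hA b)
        have htr : 0 < t ^ r := Nat.pow_pos ht
        have h2 : t ^ r * t ≤ t ^ r * (Sf.image s).card := by
          rw [← pow_succ]
          omega
        exact Nat.le_of_mul_le_mul_left h2 htr
      obtain ⟨T, hTsub, hTcard⟩ := Finset.exists_subset_card_eq himg
      let e := T.equivFinOfCardEq hTcard
      have hrepex : ∀ k : T, ∃ x, x ∈ Sf ∧ s x = (k : V) := by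
        intro k
        have := hTsub k.2
        rw [Finset.mem_image] at this
        obtain ⟨x, hx1, hx2⟩ := this
        exact ⟨x, hx1, hx2⟩
      choose rep hrep1 hrep2 using hrepex
      set f : Fin t → V := fun i => rep (e.symm i) with hf_def
      have hfmem : ∀ i, f i ∈ S ∧ f i ≠ c := fun i => (hSfmem _).mp (hrep1 _)
      have hwex : ∀ i : Fin t, ∃ w : G.Walk c (f i), w.length ≤ r + 1 ∧
          (∀ y ∈ w.support, y ≠ c → s y = s (f i)) := by
        intro i
        obtain ⟨hS1, _⟩ := hfmem i
        obtain ⟨w, hlen, hsupp, _⟩ := key (G.dist c (f i)) (f i) (hreach _ hS1) rfl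
        exact ⟨w, by rw [hlen]; exact hdist _ hS1, hsupp⟩
      choose w hwlen hwsupp using hwex
      have hsf : ∀ i, s (f i) = (e.symm i : V) := fun i => hrep2 _
      have hfinj : Function.Injective f := by
        intro i j hij
        have : (e.symm i : V) = (e.symm j : V) := by rw [← hsf i, ← hsf j, hij]
        have h2 : e.symm i = e.symm j := Subtype.ext this
        exact e.symm.injective h2
      refine ⟨c, ⟨Walk.nil, by simp⟩, f, fun i => (w i).bypass, hfinj,
        fun i => ⟨(hfmem i).1, (hfmem i).2⟩, fun i => ?_, fun i j hij x hxi hxj => ?_⟩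
      · refine ⟨Walk.bypass_isPath _, le_trans (Walk.length_bypass_le _) (hwlen i), ?_⟩
        intro x hx
        have hx' : x ∈ (w i).support := Walk.support_bypass_subset _ hx
        exact ⟨(w i).takeUntil x hx', le_trans (Walk.length_takeUntil_le _ hx') (hwlen i)⟩
      · by_contra hxc
        have hxi' : x ∈ (w i).support := Walk.support_bypass_subset _ hxi
        have hxj' : x ∈ (w j).support := Walk.support_bypass_subset _ hxj
        have h1 : s x = s (f i) := hwsupp i x hxi' hxc
        have h2 : s x = s (f j) := hwsupp j x hxj' hxc
        have : (e.symm i : V) = (e.symm j : V) := by rw [← hsf i, ← hsf j, ← h1, ← h2]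
        exact hij (e.symm.injective (Subtype.ext this))

/-- If the closed `r`-neighborhood of `v` contains more than `(d+1)^r` vertices of
degree greater than `d`, then some vertex `u` of that neighborhood reaches `d+1`
vertices of degree greater than `d`, all distinct from `u` and inside the neighborhood,
by pairwise internally vertex-disjoint paths of length at most `r` staying within the
closed `r`-neighborhood of `v`. -/
theorem stmt18 {V : Type*} [Fintype V] (G : SimpleGraph V) (r d : ℕ) (v : V)
    (hbig : (d + 1) ^ r <
      {x : V | (∃ p : G.Walk v x, p.length ≤ r) ∧ d < (G.neighborSet x).ncard}.ncard) :
    ∃ u : V, (∃ p : G.Walk v u, p.length ≤ r) ∧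
      ∃ (f : Fin (d + 1) → V) (q : ∀ i, G.Walk u (f i)),
        Function.Injective f ∧
        (∀ i, f i ≠ u ∧ d < (G.neighborSet (f i)).ncard ∧
          ∃ p : G.Walk v (f i), p.length ≤ r) ∧
        (∀ i, (q i).IsPath ∧ (q i).length ≤ r ∧
          ∀ x ∈ (q i).support, ∃ p : G.Walk v x, p.length ≤ r) ∧
        (∀ i j, i ≠ j → ∀ x, x ∈ (q i).support → x ∈ (q j).support → x = u) := by
  set S := {x : V | (∃ p : G.Walk v x, p.length ≤ r) ∧ d < (G.neighborSet x).ncard} with hS_def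
  have hS : ∀ x ∈ S, ∃ w : G.Walk v x, w.length ≤ r := fun x hx => hx.1
  obtain ⟨u, hu, f, q, hinj, hfS, hq, hdisj⟩ := treeLemma G (d + 1) r v S hS hbig
  exact ⟨u, hu, f, q, hinj,
    fun i => ⟨(hfS i).2, (hfS i).1.2, (hfS i).1.1⟩, hq, hdisj⟩
end
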